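/- Let (M, d) be a finite metric space, k ≥ 1, let (s_1, t_1), …, (s_m, t_m) be Uber demands, and let A_0 be an initial configuration. Then the optimal offline Uber cost is at least the optimal offline k-server cost for the source requests: OPT_U ≥ OPT_k. -/

import Mathlib

open Finset

/-- The matching distance between two configurations of `k` servers. -/
noncomputable def matchDist {M : Type*} [MetricSpace M] {k : ℕ} (A B : Fin k → M) : ℝ :=
  ⨅ σ : Equiv.Perm (Fin k), ∑ j, dist (A j) (B (σ j))

/-- The cost of serving the Uber demand `(s, t)` while moving from configuration
`A` to configuration `B`: the minimum over permutations `σ` and server indices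
`j` of `∑_{l ≠ j} d(A l, B (σ l)) + d(A j, s) + d(s, t) + d(t, B (σ j))`. -/
noncomputable def uberServe {M : Type*} [MetricSpace M] {k : ℕ}
    (A B : Fin k → M) (s t : M) : ℝ :=
  ⨅ σ : Equiv.Perm (Fin k), ⨅ j : Fin k,
    ((∑ l ∈ univ.erase j, dist (A l) (B (σ l))) +
      dist (A j) s + dist s t + dist t (B (σ j)))

/-- The optimal offline Uber cost for demands `(s_i, t_i)` starting from
initial configuration `A0`. -/
noncomputable def uberOPT {M : Type*} [MetricSpace M] {k m : ℕ}
    (src dst : Fin m → M) (A0 : Fin k → M) : ℝ :=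
  sInf {c | ∃ A : Fin (m + 1) → Fin k → M, A 0 = A0 ∧
    c = ∑ i : Fin m, uberServe (A i.castSucc) (A i.succ) (src i) (dst i)}

/-- The optimal offline `k`-server cost for the source requests `s_1, …, s_m`
starting from initial configuration `A0`. -/
noncomputable def kServerOPT {M : Type*} [MetricSpace M] {k m : ℕ}
    (src : Fin m → M) (A0 : Fin k → M) : ℝ :=
  sInf {c | ∃ A : Fin (m + 1) → Fin k → M, A 0 = A0 ∧
    (∀ i : Fin m, ∃ j, src i = A i.succ j) ∧
    c = ∑ i : Fin m, matchDist (A i.castSucc) (A i.succ)}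

/-!
An Uber schedule `A` yields a `k`-server schedule `B`: in step `i`, take an optimal pair
`(σ, j)` in `d_U(A (i-1), A i, s_i, t_i)` and let `B i` be `A i` with the server `σ j`, which
ends the ride at `t_i`, parked at the pickup `s_i` instead. Then `D(A (i-1), B i)` is at most the
Uber cost up to the pickup, and `D(B i, A i) ≤ d(s_i, t_i) + d(t_i, A i (σ j))` is at most the
rest. With the potential `Φ i = D(B i, A i)` the triangle inequality gives
`D(B (i-1), B i) + Φ i ≤ Φ (i-1) + d_U(A (i-1), A i, s_i, t_i)`, which telescopes as `Φ 0 = 0`.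
-/

theorem Fin.sum_castSucc_sub_succ {G : Type*} [AddCommGroup G] {m : ℕ} (f : Fin (m + 1) → G) :
    ∑ i : Fin m, (f i.castSucc - f i.succ) = f 0 - f (Fin.last m) := by
  induction m with
  | zero => simp
  | succ m ih =>
    rw [Fin.sum_univ_castSucc, ← Fin.succ_last]
    simp only [Fin.succ_castSucc]
    rw [ih (fun i => f i.castSucc)]
    simp

section

variable {M : Type*} [MetricSpace M] {k : ℕ}

theorem matchDist_nonneg (A B : Fin k → M) : 0 ≤ matchDist A B :=
  le_ciInf fun _ => by positivity

theorem matchDist_le_sum (A B : Fin k → M) (σ : Equiv.Perm (Fin k)) :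
    matchDist A B ≤ ∑ j, dist (A j) (B (σ j)) :=
  ciInf_le ⟨0, by rintro _ ⟨_, rfl⟩; positivity⟩ σ

theorem matchDist_self (A : Fin k → M) : matchDist A A = 0 :=
  le_antisymm (by simpa using matchDist_le_sum A A 1) (matchDist_nonneg A A)

theorem matchDist_triangle (A B C : Fin k → M) :
    matchDist A C ≤ matchDist A B + matchDist B C := by
  refine le_ciInf_add_ciInf fun σ τ => ?_
  calc matchDist A C
      ≤ ∑ j, dist (A j) (C ((σ.trans τ) j)) := matchDist_le_sum A C (σ.trans τ)
    _ ≤ ∑ j, (dist (A j) (B (σ j)) + dist (B (σ j)) (C (τ (σ j)))) :=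
        sum_le_sum fun j _ => dist_triangle _ _ _
    _ = (∑ j, dist (A j) (B (σ j))) + ∑ j, dist (B j) (C (τ j)) := by
        rw [sum_add_distrib, Equiv.sum_comp σ fun l => dist (B l) (C (τ l))]

theorem matchDist_update_le (A B : Fin k → M) (σ : Equiv.Perm (Fin k)) (j : Fin k) (x : M) :
    matchDist A (Function.update B (σ j) x) ≤
      (∑ l ∈ univ.erase j, dist (A l) (B (σ l))) + dist (A j) x := by
  refine (matchDist_le_sum _ _ σ).trans_eq ?_
  rw [← add_sum_erase univ _ (mem_univ j), Function.update_self, add_comm]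
  congr 1
  refine sum_congr rfl fun l hl => ?_
  rw [Function.update_of_ne (σ.injective.ne (ne_of_mem_erase hl))]

theorem matchDist_update_self_le (B : Fin k → M) (p : Fin k) (x : M) :
    matchDist (Function.update B p x) B ≤ dist x (B p) := by
  refine (matchDist_le_sum _ _ 1).trans_eq ?_
  rw [sum_eq_single p (fun l _ hl => by simp [hl]) (by simp)]
  simp

theorem exists_uberServe_eq [Nonempty (Fin k)] (A B : Fin k → M) (s t : M) :
    ∃ (σ : Equiv.Perm (Fin k)) (j : Fin k), uberServe A B s t =
      (∑ l ∈ univ.erase j, dist (A l) (B (σ l))) +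
        dist (A j) s + dist s t + dist t (B (σ j)) := by
  set cost : Equiv.Perm (Fin k) → Fin k → ℝ := fun σ j =>
    (∑ l ∈ univ.erase j, dist (A l) (B (σ l))) + dist (A j) s + dist s t + dist t (B (σ j))
  obtain ⟨σ, hσ⟩ := exists_eq_ciInf_of_finite (f := fun σ => ⨅ j, cost σ j)
  obtain ⟨j, hj⟩ := exists_eq_ciInf_of_finite (f := cost σ)
  exact ⟨σ, j, hσ.symm.trans hj.symm⟩

theorem exists_matchDist_add_matchDist_le_uberServe [Nonempty (Fin k)] (A A' : Fin k → M)
    (s t : M) : ∃ B : Fin k → M, (∃ j, s = B j) ∧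
      matchDist A B + matchDist B A' ≤ uberServe A A' s t := by
  obtain ⟨σ, j, hserve⟩ := exists_uberServe_eq A A' s t
  refine ⟨Function.update A' (σ j) s, ⟨σ j, by simp⟩, ?_⟩
  have pickup := matchDist_update_le A A' σ j s
  have dropoff := matchDist_update_self_le A' (σ j) s
  have ride := dist_triangle s t (A' (σ j))
  linarith

theorem sum_matchDist_le_of_detour {m : ℕ} {A B : Fin (m + 1) → Fin k → M} (h0 : B 0 = A 0)
    {c : Fin m → ℝ}
    (h : ∀ i : Fin m,
      matchDist (A i.castSucc) (B i.succ) + matchDist (B i.succ) (A i.succ) ≤ c i) :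
    ∑ i : Fin m, matchDist (B i.castSucc) (B i.succ) ≤ ∑ i, c i := by
  set Φ : Fin (m + 1) → ℝ := fun n => matchDist (B n) (A n)
  have step : ∀ i : Fin m,
      matchDist (B i.castSucc) (B i.succ) ≤ Φ i.castSucc - Φ i.succ + c i :=
    fun i => by linarith [matchDist_triangle (B i.castSucc) (A i.castSucc) (B i.succ), h i]
  have hΦ0 : Φ 0 = 0 := by simp only [Φ, h0, matchDist_self]
  calc ∑ i : Fin m, matchDist (B i.castSucc) (B i.succ)
      ≤ ∑ i : Fin m, (Φ i.castSucc - Φ i.succ + c i) := sum_le_sum fun i _ => step i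
    _ = Φ 0 - Φ (Fin.last m) + ∑ i, c i := by rw [sum_add_distrib, Fin.sum_castSucc_sub_succ]
    _ ≤ ∑ i, c i := by linarith [matchDist_nonneg (B (Fin.last m)) (A (Fin.last m))]

theorem kServerOPT_le_sum {m : ℕ} (src : Fin m → M) (B : Fin (m + 1) → Fin k → M)
    (hsrc : ∀ i : Fin m, ∃ j, src i = B i.succ j) :
    kServerOPT src (B 0) ≤ ∑ i : Fin m, matchDist (B i.castSucc) (B i.succ) :=
  csInf_le ⟨0, by rintro _ ⟨_, -, -, rfl⟩; exact sum_nonneg fun _ _ => matchDist_nonneg _ _⟩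
    ⟨B, rfl, hsrc, rfl⟩

end

theorem kServerOPT_le_uberOPT_general {M : Type*} [MetricSpace M] {k m : ℕ}
    (hk : 1 ≤ k) (src dst : Fin m → M) (A0 : Fin k → M) :
    kServerOPT src A0 ≤ uberOPT src dst A0 := by
  have : Nonempty (Fin k) := Fin.pos_iff_nonempty.mp hk
  refine le_csInf ⟨_, fun _ => A0, rfl, rfl⟩ ?_
  rintro _ ⟨A, rfl, rfl⟩
  choose C hsrc hC using fun i : Fin m =>
    exists_matchDist_add_matchDist_le_uberServe (A i.castSucc) (A i.succ) (src i) (dst i)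
  let B : Fin (m + 1) → Fin k → M := Fin.cons (A 0) C
  calc kServerOPT src (A 0) = kServerOPT src (B 0) := rfl
    _ ≤ ∑ i : Fin m, matchDist (B i.castSucc) (B i.succ) :=
        kServerOPT_le_sum src B (by simpa [B] using hsrc)
    _ ≤ _ := sum_matchDist_le_of_detour (A := A) (B := B) rfl fun i => by simpa [B] using hC i

/-- the optimal offline Uber cost is at least the optimal offline
`k`-server cost for the source requests. -/
theorem kServerOPT_le_uberOPT {M : Type*} [MetricSpace M] [Fintype M] {k m : ℕ}
    (hk : 1 ≤ k) (src dst : Fin m → M) (A0 : Fin k → M) :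
    kServerOPT src A0 ≤ uberOPT src dst A0 :=
  kServerOPT_le_uberOPT_general hk src dst A0
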